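/- Let Ω ⊂ ℝ^r be compact and let d_{SW_1} be the Sliced 1-Wasserstein distance on probability measures on Ω, d_{SW_1}(P,Q) = ∫_{S^{r−1}} ∫_0^1 |F_{θ*_#P}^{[-1]}(t) − F_{θ*_#Q}^{[-1]}(t)| dt dσ(θ). Then for every γ ≥ 0 the kernel K₁(P,Q) = exp(−γ · d_{SW_1}(P,Q)) is a positive definite kernel: for every n ∈ ℕ, all probability measures P_1, …, P_n on Ω and all c ∈ ℝ^n, Σ_{i,j=1}^n cᵢ cⱼ exp(−γ · d_{SW_1}(P_i,P_j)) ≥ 0. -/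

import Mathlib

open MeasureTheory
open scoped RealInnerProductSpace

/-- The generalized inverse cumulative distribution function (quantile function) of a
probability measure `μ` on `ℝ`: `F_μ^{[-1]}(t) = inf {x : F_μ(x) ≥ t}` where
`F_μ(x) = μ((−∞, x])`. -/
noncomputable def invCDF (μ : Measure ℝ) (t : ℝ) : ℝ :=
  sInf {x : ℝ | t ≤ (μ (Set.Iic x)).toReal}

/-- The uniform probability measure on the unit sphere `S^{r-1} ⊂ ℝ^r`
(the normalized surface measure). -/
noncomputable def uniformSphere (r : ℕ) :
    Measure (Metric.sphere (0 : EuclideanSpace ℝ (Fin r)) 1) :=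
  ((volume : Measure (EuclideanSpace ℝ (Fin r))).toSphere Set.univ)⁻¹ •
    (volume : Measure (EuclideanSpace ℝ (Fin r))).toSphere

/-- The Sliced 1-Wasserstein distance between probability measures on `ℝ^r`:
`d_{SW₁}(P,Q) = ∫_{S^{r−1}} ∫_0^1 |F_{θ*_#P}^{[-1]}(t) − F_{θ*_#Q}^{[-1]}(t)| dt dσ(θ)`. -/
noncomputable def slicedW1 {r : ℕ} (P Q : Measure (EuclideanSpace ℝ (Fin r))) : ℝ :=
  ∫ θ : Metric.sphere (0 : EuclideanSpace ℝ (Fin r)) 1,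
    (∫ t in Set.Ioc (0 : ℝ) 1,
      |invCDF (P.map fun x => ⟪x, (θ : EuclideanSpace ℝ (Fin r))⟫) t -
        invCDF (Q.map fun x => ⟪x, (θ : EuclideanSpace ℝ (Fin r))⟫) t|) ∂(uniformSphere r)

/-!
`|x - y| = ∫ (1_{s < x} - 1_{s < y})² ds` is conditionally negative definite on `ℝ`, since
`∑ cᵢ cⱼ (uᵢ - uⱼ)² = -2 (∑ cᵢ uᵢ)²` when `∑ cᵢ = 0`. Conditional negative definiteness survives
integration, so integrating `|F_{θ*_#Pᵢ}^{[-1]}(t) - F_{θ*_#Pⱼ}^{[-1]}(t)|` over `t` and `θ` shows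
that `γ · d_{SW₁}` is conditionally negative definite; the only analytic point is the joint
measurability of the quantile in `(θ, t)`, obtained by writing it as an infimum over `ℚ`.
Schoenberg's theorem then concludes: for a conditionally negative definite symmetric `ψ` and a base
point `i₀`, the matrix `ψ i i₀ + ψ i₀ j - ψ i j - ψ i₀ i₀` is positive semidefinite, hence so is
its entrywise exponential (Schur product theorem), and `exp (-ψ)` is a positive multiple of a
diagonal congruence of it.
-/

open Set

theorem sq_indicator_Iio_sub_indicator_Iio (x y s : ℝ) :
    ((Iio x).indicator 1 s - (Iio y).indicator 1 s : ℝ) ^ 2 =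
      (Ico (min x y) (max x y)).indicator 1 s := by
  by_cases hx : s < x <;> by_cases hy : s < y <;> simp [indicator, hx, hy]

namespace Matrix

variable {n : Type*} [Fintype n]

def IsCondNegDef (ψ : Matrix n n ℝ) : Prop :=
  ∀ c : n → ℝ, ∑ i, c i = 0 → ∑ i, ∑ j, c i * c j * ψ i j ≤ 0

theorem IsCondNegDef.smul {ψ : Matrix n n ℝ} (hψ : ψ.IsCondNegDef) {γ : ℝ} (hγ : 0 ≤ γ) :
    (γ • ψ).IsCondNegDef := fun c hc => by
  simpa only [smul_apply, smul_eq_mul, mul_left_comm _ γ, ← Finset.mul_sum] using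
    mul_nonpos_of_nonneg_of_nonpos hγ (hψ c hc)

theorem isCondNegDef_sq_sub (u : n → ℝ) : (of fun i j => (u i - u j) ^ 2).IsCondNegDef := by
  intro c hc
  have hexpand : ∑ i, ∑ j, c i * c j * (u i - u j) ^ 2 = (∑ i, c i * u i ^ 2) * ∑ j, c j +
      (∑ i, c i) * ∑ j, c j * u j ^ 2 - 2 * ((∑ i, c i * u i) * ∑ j, c j * u j) := by
    rw [Finset.sum_mul_sum, Finset.sum_mul_sum, Finset.sum_mul_sum, Finset.mul_sum,
      ← Finset.sum_add_distrib, ← Finset.sum_sub_distrib]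
    simp only [Finset.mul_sum, ← Finset.sum_add_distrib, ← Finset.sum_sub_distrib]
    exact Finset.sum_congr rfl fun i _ => Finset.sum_congr rfl fun j _ => by ring
  simp only [of_apply, hexpand, hc]
  nlinarith [sq_nonneg (∑ i, c i * u i)]

theorem IsCondNegDef.integral {X : Type*} [MeasurableSpace X] {μ : Measure X}
    {ψ : X → Matrix n n ℝ} (hψ : ∀ᵐ x ∂μ, (ψ x).IsCondNegDef)
    (hint : ∀ i j, Integrable (fun x => ψ x i j) μ) :
    (of fun i j => ∫ x, ψ x i j ∂μ).IsCondNegDef := by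
  intro c hc
  calc ∑ i, ∑ j, c i * c j * ∫ x, ψ x i j ∂μ = ∫ x, ∑ i, ∑ j, c i * c j * ψ x i j ∂μ := by
        rw [integral_finsetSum _ fun i _ =>
          integrable_finsetSum _ fun j _ => (hint i j).const_mul _]
        refine Finset.sum_congr rfl fun i _ => ?_
        rw [integral_finsetSum _ fun j _ => (hint i j).const_mul _]
        simp only [integral_const_mul]
    _ ≤ 0 := integral_nonpos_of_ae (hψ.mono fun x hx => hx c hc)

theorem isCondNegDef_abs_sub (a : n → ℝ) : (of fun i j => |a i - a j|).IsCondNegDef := by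
  have hind : ∀ i j, Integrable ((Ico (min (a i) (a j)) (max (a i) (a j))).indicator (1 : ℝ → ℝ)) :=
    fun i j => (integrableOn_const (by simp)).integrable_indicator measurableSet_Ico
  have habs : ∀ i j, |a i - a j| =
      ∫ s, ((Iio (a i)).indicator 1 s - (Iio (a j)).indicator 1 s : ℝ) ^ 2 := fun i j => by
    simp only [sq_indicator_Iio_sub_indicator_Iio, integral_indicator_one measurableSet_Ico,
      Real.volume_real_Ico_of_le min_le_max, max_sub_min_eq_abs, abs_sub_comm]
  simpa only [habs, of_apply] using IsCondNegDef.integral (μ := volume)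
    (ae_of_all _ fun s => isCondNegDef_sq_sub fun i => (Iio (a i)).indicator 1 s)
    fun i j => by simpa only [of_apply, sq_indicator_Iio_sub_indicator_Iio] using hind i j

section RCLike

open scoped ComplexOrder

variable {𝕜 : Type*} [RCLike 𝕜]

theorem PosSemidef.map_pow {A : Matrix n n 𝕜} (hA : A.PosSemidef) (m : ℕ) :
    (A.map (· ^ m)).PosSemidef := by
  induction m with
  | zero =>
    convert posSemidef_vecMulVec_self_star (1 : n → 𝕜) using 1
    ext i j
    simp [vecMulVec]
  | succ m ih =>
    convert ih.hadamard hA using 1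
    ext i j
    simp [pow_succ]

end RCLike

theorem star_dotProduct_mulVec_eq_sum_sum (A : Matrix n n ℝ) (c : n → ℝ) :
    star c ⬝ᵥ A *ᵥ c = ∑ i, ∑ j, c i * c j * A i j := by
  simp only [dotProduct, mulVec, star_trivial, Finset.mul_sum]
  exact Finset.sum_congr rfl fun i _ => Finset.sum_congr rfl fun j _ => by ring

theorem posSemidef_iff_sum_sum {A : Matrix n n ℝ} :
    A.PosSemidef ↔ A.IsHermitian ∧ ∀ c : n → ℝ, 0 ≤ ∑ i, ∑ j, c i * c j * A i j := by
  simp only [posSemidef_iff_dotProduct_mulVec, star_dotProduct_mulVec_eq_sum_sum]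

theorem PosSemidef.map_exp {A : Matrix n n ℝ} (hA : A.PosSemidef) :
    (A.map Real.exp).PosSemidef := by
  refine posSemidef_iff_sum_sum.2 ⟨hA.isHermitian.map _ fun _ => rfl, fun c => ?_⟩
  have hexp : ∀ x : ℝ, HasSum (fun m : ℕ => (m.factorial : ℝ)⁻¹ * x ^ m) (Real.exp x) := fun x => by
    simpa only [Real.exp_eq_exp_ℝ, div_eq_inv_mul] using NormedSpace.expSeries_div_hasSum_exp x
  have hsum : HasSum (fun m : ℕ => (m.factorial : ℝ)⁻¹ * ∑ i, ∑ j, c i * c j * A i j ^ m)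
      (∑ i, ∑ j, c i * c j * Real.exp (A i j)) := by
    simp only [Finset.mul_sum, mul_left_comm _ (c _ * c _)]
    exact hasSum_sum fun i _ => hasSum_sum fun j _ => (hexp (A i j)).mul_left _
  refine hsum.nonneg fun m => mul_nonneg (by positivity) ?_
  simpa using (posSemidef_iff_sum_sum.1 (hA.map_pow m)).2 c

theorem IsCondNegDef.posSemidef_of_base {ψ : Matrix n n ℝ} (hψ : ψ.IsCondNegDef)
    (hsymm : ψ.IsHermitian) (i₀ : n) :
    (of fun i j => ψ i i₀ + ψ i₀ j - ψ i j - ψ i₀ i₀).PosSemidef := by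
  classical
  refine posSemidef_iff_sum_sum.2 ⟨?_, fun c => ?_⟩
  · ext i j
    simp only [conjTranspose_apply, of_apply, star_trivial, ← hsymm.apply i j,
      ← hsymm.apply i₀ i, ← hsymm.apply j i₀]
    ring
  set s := ∑ i, c i
  set c' : n → ℝ := fun i => c i - if i = i₀ then s else 0
  have hc' : ∑ i, c' i = 0 := by simp [c', Finset.sum_sub_distrib, s]
  have hquad : ∑ i, ∑ j, c' i * c' j * ψ i j =
      - ∑ i, ∑ j, c i * c j * (ψ i i₀ + ψ i₀ j - ψ i j - ψ i₀ i₀) := by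
    simp only [c', mul_sub, sub_mul, ite_mul, Finset.sum_mul, zero_mul, mul_ite, Finset.mul_sum,
      Finset.sum_sub_distrib, Finset.sum_ite_irrel, Finset.sum_const_zero, mul_zero,
      Finset.sum_ite_eq', Finset.mem_univ, if_true, mul_add, Finset.sum_add_distrib, neg_sub, s]
    rw [Finset.sum_comm (f := fun x y => c y * c x * ψ i₀ x),
      Finset.sum_comm (f := fun x y => c y * c x * ψ i₀ i₀)]
    simp only [mul_comm]
    ring
  simpa only [of_apply, hquad, Left.neg_nonpos_iff] using hψ c' hc'

theorem IsCondNegDef.posSemidef_map_exp_neg {ψ : Matrix n n ℝ} (hψ : ψ.IsCondNegDef)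
    (hsymm : ψ.IsHermitian) : (ψ.map fun x => Real.exp (-x)).PosSemidef := by
  classical
  cases isEmpty_or_nonempty n with
  | inl _ => exact posSemidef_iff_sum_sum.2 ⟨by ext i; exact isEmptyElim i, by simp⟩
  | inr h =>
    obtain ⟨i₀⟩ := h
    -- `exp (-ψ i j) = exp (ψ i₀ i₀) * D i i * exp (K i j) * D j j`, `K` as in `posSemidef_of_base`
    set D : Matrix n n ℝ := diagonal fun i => Real.exp (-ψ i i₀)
    have hK := ((hψ.posSemidef_of_base hsymm i₀).map_exp.conjTranspose_mul_mul_same D).smul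
      (Real.exp_pos (ψ i₀ i₀)).le
    convert hK using 1
    ext i j
    simp only [D, map_apply, conjTranspose_eq_transpose_of_trivial, diagonal_transpose,
      smul_apply, mul_diagonal, diagonal_mul, of_apply, smul_eq_mul, ← Real.exp_add,
      ← hsymm.apply j i₀, star_trivial]
    ring_nf

end Matrix

theorem IsUpperSet.csInf_eq_iInf_rat {S : Set ℝ} [DecidablePred (· ∈ S)] (hS : IsUpperSet S)
    (hbdd : BddBelow S) {a : ℝ} (ha : a ∈ S) :
    sInf S = ⨅ q : ℚ, if (q : ℝ) ∈ S then (q : ℝ) else a := by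
  have hmem : ∀ q : ℚ, (if (q : ℝ) ∈ S then (q : ℝ) else a) ∈ S := fun q => by
    split_ifs with hq
    exacts [hq, ha]
  have hbdd' : BddBelow (range fun q : ℚ => if (q : ℝ) ∈ S then (q : ℝ) else a) :=
    hbdd.mono (range_subset_iff.2 hmem)
  refine le_antisymm (le_ciInf fun q => csInf_le hbdd (hmem q)) (le_csInf ⟨a, ha⟩ fun x hx => ?_)
  refine le_of_forall_lt_rat_imp_le fun q hxq => ?_
  have hq : (q : ℝ) ∈ S := hS hxq.le hx
  simpa only [if_pos hq] using ciInf_le hbdd' q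

section invCDF

variable {ν : Measure ℝ} {a b t : ℝ}

theorem isUpperSet_setOf_le_toReal_Iic [IsFiniteMeasure ν] (t : ℝ) :
    IsUpperSet {x : ℝ | t ≤ (ν (Iic x)).toReal} := fun _ _ hxy hx =>
  hx.trans (ENNReal.toReal_mono (measure_ne_top ν _) (measure_mono (Iic_subset_Iic.2 hxy)))

theorem mem_setOf_le_toReal_Iic_of_ae_mem_Icc [IsProbabilityMeasure ν]
    (hν : ∀ᵐ x ∂ν, x ∈ Icc a b) (ht : t ≤ 1) : b ∈ {x : ℝ | t ≤ (ν (Iic x)).toReal} := by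
  have : ν (Iic b) = 1 := by
    rw [← prob_compl_eq_zero_iff measurableSet_Iic]
    refine measure_mono_null (fun x hx => ?_) (ae_iff.1 hν)
    exact fun hx' => hx hx'.2
  simpa [this] using ht

theorem le_of_mem_setOf_le_toReal_Iic_of_ae_mem_Icc (hν : ∀ᵐ x ∂ν, x ∈ Icc a b) (ht : 0 < t)
    {x : ℝ} (hx : x ∈ {x : ℝ | t ≤ (ν (Iic x)).toReal}) : a ≤ x := by
  by_contra! hxa
  have : ν (Iic x) = 0 := by
    refine measure_mono_null (fun y hy => ?_) (ae_iff.1 hν)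
    exact fun hy' => (mem_Iic.1 hy).not_gt (hxa.trans_le hy'.1)
  simp only [mem_ofPred_eq, this, ENNReal.toReal_zero] at hx
  exact ht.not_ge hx

theorem invCDF_eq_iInf_rat [IsProbabilityMeasure ν] (hν : ∀ᵐ x ∂ν, x ∈ Icc a b)
    (ht : t ∈ Ioc 0 1) :
    invCDF ν t = ⨅ q : ℚ, if t ≤ (ν (Iic (q : ℝ))).toReal then (q : ℝ) else b :=
  (isUpperSet_setOf_le_toReal_Iic t).csInf_eq_iInf_rat
    ⟨a, fun _ => le_of_mem_setOf_le_toReal_Iic_of_ae_mem_Icc hν ht.1⟩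
    (mem_setOf_le_toReal_Iic_of_ae_mem_Icc hν ht.2)

theorem invCDF_mem_Icc [IsProbabilityMeasure ν] (hν : ∀ᵐ x ∂ν, x ∈ Icc a b)
    (ht : t ∈ Ioc 0 1) : invCDF ν t ∈ Icc a b :=
  ⟨le_csInf ⟨b, mem_setOf_le_toReal_Iic_of_ae_mem_Icc hν ht.2⟩
      fun _ => le_of_mem_setOf_le_toReal_Iic_of_ae_mem_Icc hν ht.1,
    csInf_le ⟨a, fun _ => le_of_mem_setOf_le_toReal_Iic_of_ae_mem_Icc hν ht.1⟩
      (mem_setOf_le_toReal_Iic_of_ae_mem_Icc hν ht.2)⟩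

end invCDF

section projection

variable {E : Type*} [NormedAddCommGroup E] [InnerProductSpace ℝ E] [MeasurableSpace E]
  [BorelSpace E] {P : Measure E} {R t : ℝ} {θ : E}

theorem ae_mem_Icc_map_inner (hP : ∀ᵐ x ∂P, ‖x‖ ≤ R) (hθ : ‖θ‖ ≤ 1) :
    ∀ᵐ s ∂(P.map fun x => ⟪x, θ⟫), s ∈ Icc (-R) R := by
  refine (ae_map_iff (by fun_prop) measurableSet_Icc).2 ?_
  filter_upwards [hP] with x hx
  refine abs_le.1 ((abs_real_inner_le_norm x θ).trans ?_)
  nlinarith [norm_nonneg x, norm_nonneg θ]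

/-- The quantile function `t ↦ invCDF (P.map ⟪·, θ⟫) t`, written as an infimum over `ℚ` so that
it is jointly measurable in `(θ, t)`; it agrees with `invCDF` for `t ∈ (0, 1]` when `P` is
concentrated on the ball of radius `R` (`invCDF_map_inner_eq_projQuantile`). -/
noncomputable def projQuantile (P : Measure E) (R : ℝ) (p : E × ℝ) : ℝ :=
  ⨅ q : ℚ, if p.2 ≤ (P {x | ⟪x, p.1⟫ ≤ q}).toReal then (q : ℝ) else R

theorem measurable_projQuantile [SecondCountableTopology E] (P : Measure E) [SFinite P] (R : ℝ) :
    Measurable (projQuantile P R) := by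
  refine Measurable.iInf fun q => Measurable.ite ?_ measurable_const measurable_const
  have hset : MeasurableSet {p : E × E | ⟪p.2, p.1⟫ ≤ q} :=
    measurableSet_le (continuous_snd.inner continuous_fst).measurable measurable_const
  exact measurableSet_le measurable_snd
    ((measurable_measure_prodMk_left hset).ennreal_toReal.comp measurable_fst)

theorem invCDF_map_inner_eq_projQuantile [IsProbabilityMeasure P] (hP : ∀ᵐ x ∂P, ‖x‖ ≤ R)
    (hθ : ‖θ‖ ≤ 1) (ht : t ∈ Ioc 0 1) :
    invCDF (P.map fun x => ⟪x, θ⟫) t = projQuantile P R (θ, t) := by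
  have hmeas : Measurable fun x : E => ⟪x, θ⟫ := by fun_prop
  have := Measure.isProbabilityMeasure_map (μ := P) hmeas.aemeasurable
  rw [invCDF_eq_iInf_rat (ae_mem_Icc_map_inner hP hθ) ht, projQuantile]
  simp only [Measure.map_apply hmeas measurableSet_Iic]
  rfl

theorem abs_projQuantile_le [IsProbabilityMeasure P] (hP : ∀ᵐ x ∂P, ‖x‖ ≤ R) (hθ : ‖θ‖ ≤ 1)
    (ht : t ∈ Ioc 0 1) : |projQuantile P R (θ, t)| ≤ R := by
  have := Measure.isProbabilityMeasure_map (μ := P) (f := fun x => ⟪x, θ⟫) (by fun_prop)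
  rw [← invCDF_map_inner_eq_projQuantile hP hθ ht]
  exact abs_le.2 (invCDF_mem_Icc (ae_mem_Icc_map_inner hP hθ) ht)

end projection

theorem ae_norm_le_of_subset_closedBall {E : Type*} [NormedAddCommGroup E] [MeasurableSpace E]
    [OpensMeasurableSpace E] {P : Measure E} [IsProbabilityMeasure P] {Ω : Set E} {R : ℝ}
    (hΩR : Ω ⊆ Metric.closedBall 0 R) (hPΩ : P Ω = 1) : ∀ᵐ x ∂P, ‖x‖ ≤ R := by
  have hball : P (Metric.closedBall 0 R)ᶜ = 0 :=
    (prob_compl_eq_zero_iff Metric.isClosed_closedBall.measurableSet).2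
      (le_antisymm prob_le_one (hPΩ ▸ measure_mono hΩR))
  filter_upwards [mem_ae_iff.2 hball] with x hx
  simpa using hx

section slicedW1

variable {r : ℕ}

instance isFiniteMeasure_uniformSphere : IsFiniteMeasure (uniformSphere r) :=
  ⟨by
    rw [uniformSphere, Measure.smul_apply, smul_eq_mul]
    exact (ENNReal.inv_mul_le_one _).trans_lt ENNReal.one_lt_top⟩

theorem slicedW1_comm (P Q : Measure (EuclideanSpace ℝ (Fin r))) :
    slicedW1 P Q = slicedW1 Q P := by
  simp only [slicedW1, abs_sub_comm]

theorem slicedW1_eq_integral_projQuantile {P Q : Measure (EuclideanSpace ℝ (Fin r))}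
    [IsProbabilityMeasure P] [IsProbabilityMeasure Q] {R : ℝ} (hP : ∀ᵐ x ∂P, ‖x‖ ≤ R)
    (hQ : ∀ᵐ x ∂Q, ‖x‖ ≤ R) :
    slicedW1 P Q = ∫ θ : Metric.sphere (0 : EuclideanSpace ℝ (Fin r)) 1,
      (∫ t in Ioc (0 : ℝ) 1, |projQuantile P R (θ, t) - projQuantile Q R (θ, t)|)
        ∂uniformSphere r := by
  refine integral_congr_ae (ae_of_all _ fun θ => setIntegral_congr_fun measurableSet_Ioc
    fun t ht => ?_)
  have hθ : ‖(θ : EuclideanSpace ℝ (Fin r))‖ ≤ 1 := (norm_eq_of_mem_sphere θ).le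
  simp only [invCDF_map_inner_eq_projQuantile hP hθ ht, invCDF_map_inner_eq_projQuantile hQ hθ ht]

theorem isCondNegDef_slicedW1 {ι : Type*} [Fintype ι] {P : ι → Measure (EuclideanSpace ℝ (Fin r))}
    [∀ i, IsProbabilityMeasure (P i)] {R : ℝ} (hP : ∀ i, ∀ᵐ x ∂P i, ‖x‖ ≤ R) :
    (Matrix.of fun i j => slicedW1 (P i) (P j)).IsCondNegDef := by
  set F : ι → ι → Metric.sphere (0 : EuclideanSpace ℝ (Fin r)) 1 × ℝ → ℝ := fun i j p =>
    |projQuantile (P i) R (p.1, p.2) - projQuantile (P j) R (p.1, p.2)|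
  have hFmeas : ∀ i j, Measurable (F i j) := fun i j => by
    have hval : Measurable fun p : Metric.sphere (0 : EuclideanSpace ℝ (Fin r)) 1 × ℝ =>
        ((p.1 : EuclideanSpace ℝ (Fin r)), p.2) := by fun_prop
    exact (((measurable_projQuantile _ R).comp hval).sub
      ((measurable_projQuantile _ R).comp hval)).abs
  have hFle : ∀ i j θ, ∀ t ∈ Ioc (0 : ℝ) 1, ‖F i j (θ, t)‖ ≤ 2 * R := fun i j θ t ht => by
    have hθ : ‖(θ : EuclideanSpace ℝ (Fin r))‖ ≤ 1 := (norm_eq_of_mem_sphere θ).le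
    have hi := abs_projQuantile_le (hP i) hθ ht
    have hj := abs_projQuantile_le (hP j) hθ ht
    simp only [F, Real.norm_eq_abs, abs_abs]
    linarith [abs_sub (projQuantile (P i) R (↑θ, t)) (projQuantile (P j) R (↑θ, t))]
  have hinner : ∀ θ i j, IntegrableOn (fun t => F i j (θ, t)) (Ioc 0 1) := fun θ i j =>
    Measure.integrableOn_of_bounded (by simp)
      ((hFmeas i j).comp measurable_prodMk_left).aestronglyMeasurable
      (ae_restrict_of_forall_mem measurableSet_Ioc (hFle i j θ))
  have houter : ∀ i j, Integrable (fun θ => ∫ t in Ioc 0 1, F i j (θ, t)) (uniformSphere r) :=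
    fun i j => .of_bound (hFmeas i j).stronglyMeasurable.integral_prod_right'.aestronglyMeasurable
      (2 * R * 1) (ae_of_all _ fun θ =>
        (norm_setIntegral_le_of_norm_le_const (by simp) (hFle i j θ)).trans_eq (by simp))
  have hcnd := Matrix.IsCondNegDef.integral (ae_of_all _ fun θ => Matrix.IsCondNegDef.integral
    (ae_of_all _ fun t => Matrix.isCondNegDef_abs_sub _) (hinner θ)) houter
  convert hcnd using 1
  ext i j
  simpa only [Matrix.of_apply] using slicedW1_eq_integral_projQuantile (hP i) (hP j)

end slicedW1

/-- **The Gaussian (Laplace-type) Sliced 1-Wasserstein kernel is positive definite.**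
Let `Ω ⊂ ℝ^r` be compact.  For every `γ ≥ 0`, the kernel
`K₁(P,Q) = exp(−γ·d_{SW₁}(P,Q))` is positive definite on the probability measures on `Ω`:
for every `n`, all probability measures `P₁, …, Pₙ` on `Ω` and all `c ∈ ℝⁿ`,
`∑_{i,j} cᵢ cⱼ exp(−γ·d_{SW₁}(Pᵢ,Pⱼ)) ≥ 0`. -/
theorem gaussian_slicedW1_kernel_posdef {r : ℕ} (Ω : Set (EuclideanSpace ℝ (Fin r)))
    (hΩ : IsCompact Ω) (γ : ℝ) (hγ : 0 ≤ γ) :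
    ∀ (n : ℕ) (P : Fin n → Measure (EuclideanSpace ℝ (Fin r))),
      (∀ i, IsProbabilityMeasure (P i)) → (∀ i, P i Ω = 1) →
      ∀ c : Fin n → ℝ,
        0 ≤ ∑ i, ∑ j, c i * c j * Real.exp (-γ * slicedW1 (P i) (P j)) := by
  intro n P hprob hPΩ c
  obtain ⟨R, hΩR⟩ := hΩ.isBounded.subset_closedBall 0
  have hPR : ∀ i, ∀ᵐ x ∂P i, ‖x‖ ≤ R := fun i => ae_norm_le_of_subset_closedBall hΩR (hPΩ i)
  have hψ : (γ • Matrix.of fun i j => slicedW1 (P i) (P j)).IsCondNegDef :=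
    (isCondNegDef_slicedW1 hPR).smul hγ
  have hsymm : (γ • Matrix.of fun i j => slicedW1 (P i) (P j)).IsHermitian := by
    ext i j
    simp [slicedW1_comm]
  simpa [neg_mul] using (Matrix.posSemidef_iff_sum_sum.1 (hψ.posSemidef_map_exp_neg hsymm)).2 c
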